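/- arXiv:2311.05215 — 3 statements merged into one kernel-verified Lean document; each statement's English description precedes it below -/
import Mathlib

section
/- Let H be a symmetric positive definite l×l real matrix, G a q×l real matrix, f ∈ ℝˡ, e ∈ ℝ^q, R an invertible l×l matrix and r ∈ ℝˡ. Define H̃ = Rᵀ H R, G̃ = G R, f̃ = Rᵀ(f + H r), ẽ = e − G r. Then G̃ H̃⁻¹ f̃ + ẽ = G H⁻¹ f + e. -/
open Matrix

theorem stmt_1 {l q : ℕ} (H : Matrix (Fin l) (Fin l) ℝ) (G : Matrix (Fin q) (Fin l) ℝ)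
    (f : Fin l → ℝ) (e : Fin q → ℝ) (R : Matrix (Fin l) (Fin l) ℝ) (r : Fin l → ℝ)
    (hH : H.PosDef) (hR : IsUnit R) :
    (G * R).mulVec ((Rᵀ * H * R)⁻¹.mulVec (Rᵀ.mulVec (f + H.mulVec r))) + (e - G.mulVec r)
      = G.mulVec (H⁻¹.mulVec f) + e := by
  have hHu : IsUnit H := (Matrix.isUnit_iff_isUnit_det H).2 (isUnit_iff_ne_zero.2 (ne_of_gt hH.det_pos))
  have hRt' : IsUnit Rᵀ := (Matrix.isUnit_iff_isUnit_det _).2 (by rw [Matrix.det_transpose]; exact (Matrix.isUnit_iff_isUnit_det R).1 hR)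
  have hinv : (Rᵀ * H * R)⁻¹ = R⁻¹ * H⁻¹ * Rᵀ⁻¹ := by
    rw [Matrix.mul_inv_rev, Matrix.mul_inv_rev, Matrix.mul_assoc]
  simp only [hinv, Matrix.mulVec_mulVec]
  have key : G * R * (R⁻¹ * H⁻¹ * Rᵀ⁻¹ * Rᵀ) = G * H⁻¹ := by
    rw [Matrix.mul_assoc (R⁻¹ * H⁻¹), Matrix.nonsing_inv_mul _ ((Matrix.isUnit_iff_isUnit_det _).1 hRt'), Matrix.mul_one,
      Matrix.mul_assoc G R, ← Matrix.mul_assoc R, Matrix.mul_nonsing_inv _ ((Matrix.isUnit_iff_isUnit_det _).1 hR), Matrix.one_mul]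
  rw [key, Matrix.mulVec_add, Matrix.mulVec_mulVec, Matrix.mul_assoc G,
    Matrix.nonsing_inv_mul _ ((Matrix.isUnit_iff_isUnit_det _).1 hHu), Matrix.mul_one, ← Matrix.mulVec_mulVec]
  abel
end

section
/- Suppose the parameters (Ĥ, Ĝ, f̂, ê, R̂, r̂) are consistent with observed transformed data (H̃, G̃, f̃, ẽ), i.e., H̃ = R̂ᵀ Ĥ R̂, G̃ = Ĝ R̂, f̃ = R̂ᵀ(f̂ + Ĥ r̂), ẽ = ê − Ĝ r̂. For any invertible l×l matrix R̃ and any r̃ ∈ ℝˡ, define Ȟ := R̃ᵀ Ĥ R̃, Ǧ := Ĝ R̃, f̌ := R̃ᵀ(f̂ + Ĥ r̃), ě := ê − Ĝ r̃, Ř := R̃⁻¹ R̂, ř := R̃⁻¹(r̂ − r̃). Then the new guess (Ȟ, Ǧ, f̌, ě, Ř, ř) is also consistent with the same data: H̃ = Řᵀ Ȟ Ř, G̃ = Ǧ Ř, f̃ = Řᵀ(f̌ + Ȟ ř), ẽ = ě − Ǧ ř. -/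
open Matrix

theorem stmt_3 {l q : ℕ}
    (Hhat Rhat Rtil : Matrix (Fin l) (Fin l) ℝ) (Ghat : Matrix (Fin q) (Fin l) ℝ)
    (fhat rhat rtil : Fin l → ℝ) (ehat : Fin q → ℝ)
    (Htil : Matrix (Fin l) (Fin l) ℝ) (Gtil : Matrix (Fin q) (Fin l) ℝ)
    (ftil : Fin l → ℝ) (etil : Fin q → ℝ)
    (hRhat : IsUnit Rhat) (hRtil : IsUnit Rtil)
    (h1 : Htil = Rhatᵀ * Hhat * Rhat) (h2 : Gtil = Ghat * Rhat)
    (h3 : ftil = Rhatᵀ.mulVec (fhat + Hhat.mulVec rhat))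
    (h4 : etil = ehat - Ghat.mulVec rhat) :
    Htil = (Rtil⁻¹ * Rhat)ᵀ * (Rtilᵀ * Hhat * Rtil) * (Rtil⁻¹ * Rhat) ∧
    Gtil = (Ghat * Rtil) * (Rtil⁻¹ * Rhat) ∧
    ftil = (Rtil⁻¹ * Rhat)ᵀ.mulVec
      (Rtilᵀ.mulVec (fhat + Hhat.mulVec rtil) +
        (Rtilᵀ * Hhat * Rtil).mulVec (Rtil⁻¹.mulVec (rhat - rtil))) ∧
    etil = (ehat - Ghat.mulVec rtil) -
      (Ghat * Rtil).mulVec (Rtil⁻¹.mulVec (rhat - rtil)) := by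
  have hdet : IsUnit Rtil.det := (Matrix.isUnit_iff_isUnit_det Rtil).mp hRtil
  have hinv : Rtil * Rtil⁻¹ = 1 := Matrix.mul_nonsing_inv Rtil hdet
  have hc : ∀ A : Matrix (Fin l) (Fin l) ℝ, Rtil * (Rtil⁻¹ * A) = A := by
    intro A; rw [← Matrix.mul_assoc, hinv, Matrix.one_mul]
  have hct : (Rtil⁻¹ * Rhat)ᵀ * Rtilᵀ = Rhatᵀ := by
    rw [← Matrix.transpose_mul, hc]
  refine ⟨?_, ?_, ?_, ?_⟩
  · rw [h1]; symm
    calc (Rtil⁻¹ * Rhat)ᵀ * (Rtilᵀ * Hhat * Rtil) * (Rtil⁻¹ * Rhat)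
        = ((Rtil⁻¹ * Rhat)ᵀ * Rtilᵀ) * Hhat * (Rtil * (Rtil⁻¹ * Rhat)) := by
          simp only [Matrix.mul_assoc]
      _ = Rhatᵀ * Hhat * Rhat := by rw [hct, hc]
  · rw [h2, Matrix.mul_assoc, hc]
  · rw [h3]; symm
    rw [Matrix.mulVec_add, Matrix.mulVec_mulVec, Matrix.mulVec_mulVec, hct, Matrix.mulVec_mulVec]
    have : (Rtil⁻¹ * Rhat)ᵀ * (Rtilᵀ * Hhat * Rtil) * Rtil⁻¹ = Rhatᵀ * Hhat := by
      calc (Rtil⁻¹ * Rhat)ᵀ * (Rtilᵀ * Hhat * Rtil) * Rtil⁻¹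
          = ((Rtil⁻¹ * Rhat)ᵀ * Rtilᵀ) * Hhat * (Rtil * Rtil⁻¹) := by
            simp only [Matrix.mul_assoc]
        _ = Rhatᵀ * Hhat := by rw [hct, hinv, Matrix.mul_one]
    rw [this, ← Matrix.mulVec_mulVec]
    simp only [Matrix.mulVec_add, Matrix.mulVec_sub]
    abel
  · rw [h4]; symm
    rw [Matrix.mulVec_mulVec, Matrix.mul_assoc, hinv, Matrix.mul_one,
      Matrix.mulVec_sub]
    abel
end

section
/- Let (H, G, f, e) be original parameters transformed with key (R, r) into (H̃, G̃, f̃, ẽ) via H̃ = Rᵀ H R, G̃ = G R, f̃ = Rᵀ(f + H r), ẽ = e − G r. Suppose (Ĥ, Ĝ, f̂, ê, R̂, r̂) is any consistent guess (i.e., H̃ = R̂ᵀ Ĥ R̂, G̃ = Ĝ R̂, f̃ = R̂ᵀ(f̂ + Ĥ r̂), ẽ = ê − Ĝ r̂, with R̂ invertible). Then the update transformation with R̃ := R̂ R⁻¹ and r̃ := r̂ − R̃ r applied to the guess via Ȟ := R̃ᵀ Ĥ R̃, Ǧ := Ĝ R̃, f̌ := R̃ᵀ(f̂ + Ĥ r̃),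 ě := ê − Ĝ r̃, Ř := R̃⁻¹ R̂, ř := R̃⁻¹(r̂ − r̃) yields the correct guess: Ȟ = H, Ǧ = G, f̌ = f, ě = e, Ř = R, ř = r. -/
open Matrix

theorem stmt_4 {l q : ℕ}
    (H Hhat R Rhat : Matrix (Fin l) (Fin l) ℝ) (G Ghat : Matrix (Fin q) (Fin l) ℝ)
    (f fhat r rhat : Fin l → ℝ) (e ehat : Fin q → ℝ)
    (hR : IsUnit R) (hRhat : IsUnit Rhat)
    (h1 : Rᵀ * H * R = Rhatᵀ * Hhat * Rhat) (h2 : G * R = Ghat * Rhat)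
    (h3 : Rᵀ.mulVec (f + H.mulVec r) = Rhatᵀ.mulVec (fhat + Hhat.mulVec rhat))
    (h4 : e - G.mulVec r = ehat - Ghat.mulVec rhat) :
    (Rhat * R⁻¹)ᵀ * Hhat * (Rhat * R⁻¹) = H ∧
    Ghat * (Rhat * R⁻¹) = G ∧
    (Rhat * R⁻¹)ᵀ.mulVec (fhat + Hhat.mulVec (rhat - (Rhat * R⁻¹).mulVec r)) = f ∧
    ehat - Ghat.mulVec (rhat - (Rhat * R⁻¹).mulVec r) = e ∧
    (Rhat * R⁻¹)⁻¹ * Rhat = R ∧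
    (Rhat * R⁻¹)⁻¹.mulVec (rhat - (rhat - (Rhat * R⁻¹).mulVec r)) = r := by
  have hRd : IsUnit R.det := (Matrix.isUnit_iff_isUnit_det R).mp hR
  have hRhd : IsUnit Rhat.det := (Matrix.isUnit_iff_isUnit_det Rhat).mp hRhat
  have hRTd : IsUnit Rᵀ.det := by simpa [Matrix.det_transpose] using hRd
  set B := Rhat * R⁻¹ with hBdef
  have hBT : Bᵀ = Rᵀ⁻¹ * Rhatᵀ := by
    rw [hBdef, Matrix.transpose_mul, Matrix.transpose_nonsing_inv]
  have p1 : Bᵀ * Hhat * B = H := by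
    calc Bᵀ * Hhat * B = Rᵀ⁻¹ * (Rhatᵀ * Hhat * Rhat) * R⁻¹ := by
          rw [hBT, hBdef]; noncomm_ring
      _ = Rᵀ⁻¹ * (Rᵀ * H * R) * R⁻¹ := by rw [h1]
      _ = H := by
          rw [Matrix.mul_assoc (Rᵀ) H R, Matrix.nonsing_inv_mul_cancel_left _ _ hRTd,
            Matrix.mul_assoc, Matrix.mul_nonsing_inv _ hRd, Matrix.mul_one]
  have p2 : Ghat * B = G := by
    rw [hBdef, ← Matrix.mul_assoc, ← h2, Matrix.mul_nonsing_inv_cancel_right _ _ hRd]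
  have p3' : Bᵀ.mulVec (fhat + Hhat.mulVec rhat) = f + H.mulVec r := by
    rw [hBT, ← Matrix.mulVec_mulVec, ← h3, Matrix.mulVec_mulVec,
      Matrix.nonsing_inv_mul _ hRTd, Matrix.one_mulVec]
  have p3 : Bᵀ.mulVec (fhat + Hhat.mulVec (rhat - B.mulVec r)) = f := by
    have : fhat + Hhat.mulVec (rhat - B.mulVec r)
        = (fhat + Hhat.mulVec rhat) - Hhat.mulVec (B.mulVec r) := by
      rw [Matrix.mulVec_sub]; abel
    rw [this, Matrix.mulVec_sub, p3', Matrix.mulVec_mulVec, Matrix.mulVec_mulVec, p1]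
    abel
  have p4 : ehat - Ghat.mulVec (rhat - B.mulVec r) = e := by
    have : ehat - Ghat.mulVec (rhat - B.mulVec r)
        = (ehat - Ghat.mulVec rhat) + Ghat.mulVec (B.mulVec r) := by
      rw [Matrix.mulVec_sub]; abel
    rw [this, ← h4, Matrix.mulVec_mulVec, p2]
    abel
  have hBinv : B⁻¹ = R * Rhat⁻¹ := by
    rw [hBdef, Matrix.mul_inv_rev, Matrix.nonsing_inv_nonsing_inv _ hRd]
  have p5 : B⁻¹ * Rhat = R := by
    rw [hBinv, Matrix.mul_assoc, Matrix.nonsing_inv_mul _ hRhd, Matrix.mul_one]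
  have p6 : B⁻¹.mulVec (rhat - (rhat - B.mulVec r)) = r := by
    have h : rhat - (rhat - B.mulVec r) = B.mulVec r := by abel
    rw [h, Matrix.mulVec_mulVec, hBinv, hBdef]
    rw [show R * Rhat⁻¹ * (Rhat * R⁻¹) = R * (Rhat⁻¹ * Rhat) * R⁻¹ by noncomm_ring,
      Matrix.nonsing_inv_mul _ hRhd, Matrix.mul_one, Matrix.mul_nonsing_inv _ hRd,
      Matrix.one_mulVec]
  exact ⟨p1, p2, p3, p4, p5, p6⟩
end
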